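/- arXiv:math/0609788 — 3 statements merged into one kernel-verified Lean document; each statement's English description precedes it below -/
import Mathlib

section
/- Let X and Y be permutation classes with 1 ∈ Y. Then a permutation π belongs to the wreath product X ≀ Y if and only if the Y-profile π^Y of π belongs to X. -/
/-- Pattern involvement: `σ` occurs as a pattern in `π`. -/
def Involves {k n : ℕ} (σ : Equiv.Perm (Fin k)) (π : Equiv.Perm (Fin n)) : Prop :=
  ∃ f : Fin k → Fin n, StrictMono f ∧ ∀ a b : Fin k, σ a < σ b ↔ π (f a) < π (f b)

/-- Finite permutations of arbitrary length. -/
abbrev PermS := Σ n : ℕ, Equiv.Perm (Fin n)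

/-- Pattern involvement on permutations of arbitrary length. -/
def SInvolves (s t : PermS) : Prop := Involves s.2 t.2

/-- A permutation class: a set of permutations closed downwards under involvement. -/
def IsPermClass (X : Set PermS) : Prop :=
  ∀ s t : PermS, SInvolves s t → t ∈ X → s ∈ X

/-- A set of positions is consecutive (order-convex). -/
def Consec {n : ℕ} (s : Finset (Fin n)) : Prop :=
  ∀ ⦃a b c : Fin n⦄, a ∈ s → c ∈ s → a ≤ b → b ≤ c → b ∈ s

/-- An interval (block) of a permutation: consecutive positions with consecutive values. -/
def IsInterval {n : ℕ} (π : Equiv.Perm (Fin n)) (s : Finset (Fin n)) : Prop :=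
  Consec s ∧ Consec (s.image π)

/-- `α` is the pattern of `π` on the set of positions `s`. -/
def IsPatternOf {k n : ℕ} (α : Equiv.Perm (Fin k)) (π : Equiv.Perm (Fin n))
    (s : Finset (Fin n)) : Prop :=
  ∃ f : Fin k → Fin n, StrictMono f ∧ (∀ i, f i ∈ s) ∧ (∀ x ∈ s, ∃ i, f i = x) ∧
    ∀ a b : Fin k, α a < α b ↔ π (f a) < π (f b)

/-- `π` is the inflation of `σ` with the given (nonempty, interval) blocks. -/
def IsInflation {n m : ℕ} (π : Equiv.Perm (Fin n)) (σ : Equiv.Perm (Fin m))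
    (blocks : Fin m → Finset (Fin n)) : Prop :=
  (∀ i, (blocks i).Nonempty) ∧
  (∀ i, IsInterval π (blocks i)) ∧
  (∀ x : Fin n, ∃! i, x ∈ blocks i) ∧
  (∀ i j : Fin m, i < j → ∀ x ∈ blocks i, ∀ y ∈ blocks j, x < y) ∧
  (∀ i j : Fin m, i ≠ j → ∀ x ∈ blocks i, ∀ y ∈ blocks j, (σ i < σ j ↔ π x < π y))

/-- `π'` is a `Y`-deflation of `π`: `π = π'[α₁,…,α_k]` with all `αᵢ ∈ Y`. -/
def IsYDeflation (Y : Set PermS) {m n : ℕ} (π' : Equiv.Perm (Fin m))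
    (π : Equiv.Perm (Fin n)) : Prop :=
  ∃ blocks : Fin m → Finset (Fin n), IsInflation π π' blocks ∧
    ∀ i, ∃ (k : ℕ) (α : Equiv.Perm (Fin k)), (⟨k, α⟩ : PermS) ∈ Y ∧ IsPatternOf α π (blocks i)

/-- Membership in the wreath product `X ≀ Y`. -/
def InWreath (X Y : Set PermS) {n : ℕ} (π : Equiv.Perm (Fin n)) : Prop :=
  ∃ (m : ℕ) (σ : Equiv.Perm (Fin m)), (⟨m, σ⟩ : PermS) ∈ X ∧ IsYDeflation Y σ π

/-- The wreath product `X ≀ Y` as a set of permutations. -/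
def WreathSet (X Y : Set PermS) : Set PermS := {s : PermS | InWreath X Y s.2}

/-- The class of permutations avoiding every pattern in `B`. -/
def Av (B : Set PermS) : Set PermS := {s : PermS | ∀ b ∈ B, ¬ SInvolves b s}

/-- The basis of a class: minimal permutations not in it. -/
def PermBasis (C : Set PermS) : Set PermS :=
  {s : PermS | s ∉ C ∧ ∀ t : PermS, SInvolves t s → t ≠ s → t ∈ C}

/-- A permutation is simple if its only intervals are trivial. -/
def IsSimple {n : ℕ} (π : Equiv.Perm (Fin n)) : Prop :=
  ∀ s : Finset (Fin n), IsInterval π s → s.card ≤ 1 ∨ s = Finset.univ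

/-- Sum decomposable: a proper nonempty initial block with the smallest values. -/
def SumDecomposable {n : ℕ} (π : Equiv.Perm (Fin n)) : Prop :=
  ∃ s : Finset (Fin n), s.Nonempty ∧ s ≠ Finset.univ ∧
    ∀ x ∈ s, ∀ y : Fin n, y ∉ s → x < y ∧ π x < π y

/-- Skew decomposable: a proper nonempty initial block with the largest values. -/
def SkewDecomposable {n : ℕ} (π : Equiv.Perm (Fin n)) : Prop :=
  ∃ s : Finset (Fin n), s.Nonempty ∧ s ≠ Finset.univ ∧
    ∀ x ∈ s, ∀ y : Fin n, y ∉ s → x < y ∧ π y < π x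

/-!
Let `A` be a partition of the positions of `π` into `Y`-intervals with the fewest blocks, and `B`
any other one. Every block of `A` can be matched injectively with a block of `B` that it meets;
since blocks are consecutive, the matching is increasing, and reading values at common points
shows that it embeds the quotient `π^Y` of `A` into the quotient of `B`. Hence `π^Y` is involved
in every `Y`-deflation of `π`, and `X`, being closed downwards, contains it as soon as it contains
one of them.

The matching is built by induction on the set of positions. The last blocks of `A` and `B` both
end at the last position, so they are nested; removing the larger one from both partitions leaves
two partitions of the remaining positions (a subset of a `Y`-interval still has its pattern in
`Y`, and the difference of two intervals neither of which contains the other is an interval), and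
minimality of `A` makes the restriction of `A` minimal again.
-/

open Finset

namespace Consec

variable {n : ℕ} {s t : Finset (Fin n)}

theorem sdiff (hs : Consec s) (ht : Consec t) (hts : ¬ t ⊆ s) : Consec (s \ t) := by
  obtain ⟨z, hzt, hzs⟩ := not_subset.mp hts
  intro a b c ha hc hab hbc
  simp only [mem_sdiff] at ha hc ⊢
  refine ⟨hs ha.1 hc.1 hab hbc, fun hbt => ?_⟩
  rcases lt_or_ge z a with hza | haz
  · exact ha.2 (ht hzt hbt hza.le hab)
  rcases le_or_gt z c with hzc | hcz
  · exact hzs (hs ha.1 hc.1 haz hzc)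
  · exact hc.2 (ht hbt hzt hbc hcz.le)

theorem lt_of_lt (hs : Consec s) (ht : Consec t) (hst : Disjoint s t) {x y x' y' : Fin n}
    (hx : x ∈ s) (hy : y ∈ t) (hx' : x' ∈ s) (hy' : y' ∈ t) (hxy : x < y) : x' < y' := by
  by_contra! hyx
  rcases le_or_gt x y' with hxy' | hyx'
  · exact disjoint_left.mp hst (hs hx hx' hxy' hyx) hy'
  · exact disjoint_left.mp hst hx (ht hy' hy hyx'.le hxy.le)

theorem subset_or_subset (hs : Consec s) (ht : Consec t) {z : Fin n} (hzs : z ∈ s) (hzt : z ∈ t)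
    (hs_le : ∀ x ∈ s, x ≤ z) (ht_le : ∀ x ∈ t, x ≤ z) : s ⊆ t ∨ t ⊆ s := by
  by_contra! h
  obtain ⟨⟨x, hxs, hxt⟩, ⟨y, hyt, hys⟩⟩ := And.intro (not_subset.mp h.1) (not_subset.mp h.2)
  rcases le_total x y with hxy | hyx
  · exact hys (hs hxs hzs hxy (ht_le y hyt))
  · exact hxt (ht hyt hzt hyx (hs_le x hxs))

end Consec

namespace IsInterval

variable {n : ℕ} {π : Equiv.Perm (Fin n)} {s t : Finset (Fin n)}

theorem sdiff (hs : IsInterval π s) (ht : IsInterval π t) (hts : ¬ t ⊆ s) :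
    IsInterval π (s \ t) := by
  refine ⟨hs.1.sdiff ht.1 hts, ?_⟩
  rw [image_sdiff _ _ π.injective]
  exact hs.2.sdiff ht.2 fun h => hts ((image_subset_image_iff π.injective).mp h)

theorem lt_of_lt (hs : IsInterval π s) (ht : IsInterval π t) (hst : Disjoint s t)
    {x y x' y' : Fin n} (hx : x ∈ s) (hy : y ∈ t) (hx' : x' ∈ s) (hy' : y' ∈ t)
    (hxy : π x < π y) : π x' < π y' :=
  hs.2.lt_of_lt ht.2 (disjoint_image π.injective |>.mpr hst) (mem_image_of_mem _ hx)
    (mem_image_of_mem _ hy) (mem_image_of_mem _ hx') (mem_image_of_mem _ hy') hxy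

end IsInterval

theorem exists_perm_lt_iff_lt {α : Type*} [LinearOrder α] {m : ℕ} {f : Fin m → α}
    (hf : Function.Injective f) : ∃ σ : Equiv.Perm (Fin m), ∀ i j, σ i < σ j ↔ f i < f j := by
  have hmono : StrictMono (f ∘ Tuple.sort f) :=
    (Tuple.monotone_sort f).strictMono_of_injective (hf.comp (Tuple.sort f).injective)
  refine ⟨(Tuple.sort f).symm, fun i j => ?_⟩
  rw [← hmono.lt_iff_lt]
  simp

theorem exists_isPatternOf {n : ℕ} (π : Equiv.Perm (Fin n)) (s : Finset (Fin n)) :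
    ∃ α : Equiv.Perm (Fin s.card), IsPatternOf α π s := by
  let f := s.orderEmbOfFin rfl
  obtain ⟨α, hα⟩ := exists_perm_lt_iff_lt (f := fun i => π (f i)) (π.injective.comp f.injective)
  refine ⟨α, f, f.strictMono, s.orderEmbOfFin_mem rfl, fun x hx => ?_, hα⟩
  obtain ⟨i, hi⟩ := (s.orderIsoOfFin rfl).surjective ⟨x, hx⟩
  exact ⟨i, congrArg Subtype.val hi⟩

section

variable {n : ℕ} {Y : Set PermS} {π : Equiv.Perm (Fin n)}

def HasYPattern (Y : Set PermS) (π : Equiv.Perm (Fin n)) (s : Finset (Fin n)) : Prop :=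
  ∃ (k : ℕ) (α : Equiv.Perm (Fin k)), (⟨k, α⟩ : PermS) ∈ Y ∧ IsPatternOf α π s

theorem HasYPattern.mono (hY : IsPermClass Y) {s t : Finset (Fin n)} (hts : t ⊆ s)
    (h : HasYPattern Y π s) : HasYPattern Y π t := by
  obtain ⟨k, α, hαY, f, hf, -, hf_surj, hα⟩ := h
  obtain ⟨β, f', hf', hf't, hf'_surj, hβ⟩ := exists_isPatternOf π t
  refine ⟨t.card, β, hY _ _ ?_ hαY, f', hf', hf't, hf'_surj, hβ⟩
  choose g hg using fun i => hf_surj (f' i) (hts (hf't i))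
  refine ⟨g, fun a b hab => hf.lt_iff_lt.mp ?_, fun a b => ?_⟩
  · rw [hg, hg]
    exact hf' hab
  · rw [hβ, hα, hg, hg]

structure IsYPartition (Y : Set PermS) (π : Equiv.Perm (Fin n)) (C : Finset (Fin n))
    (P : Finset (Finset (Fin n))) : Prop where
  nonempty : ∀ β ∈ P, β.Nonempty
  isInterval : ∀ β ∈ P, IsInterval π β
  hasYPattern : ∀ β ∈ P, HasYPattern Y π β
  disjoint : ∀ β ∈ P, ∀ γ ∈ P, β ≠ γ → Disjoint β γ
  mem_iff : ∀ x, x ∈ C ↔ ∃ β ∈ P, x ∈ β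

namespace IsYPartition

variable {C t : Finset (Fin n)} {P : Finset (Finset (Fin n))}

theorem subset (hP : IsYPartition Y π C P) {β : Finset (Fin n)} (hβ : β ∈ P) : β ⊆ C :=
  fun x hx => (hP.mem_iff x).mpr ⟨β, hβ, hx⟩

theorem eq_of_mem (hP : IsYPartition Y π C P) {β γ : Finset (Fin n)} (hβ : β ∈ P) (hγ : γ ∈ P)
    {x : Fin n} (hxβ : x ∈ β) (hxγ : x ∈ γ) : β = γ := by
  by_contra h
  exact disjoint_left.mp (hP.disjoint β hβ γ hγ h) hxβ hxγ

theorem insert (hP : IsYPartition Y π C P) (ht : t.Nonempty) (ht' : IsInterval π t)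
    (htY : HasYPattern Y π t) (hCt : Disjoint C t) : IsYPartition Y π (C ∪ t) (insert t P) where
  nonempty := by simpa [ht] using hP.nonempty
  isInterval := by simpa [ht'] using hP.isInterval
  hasYPattern := by simpa [htY] using hP.hasYPattern
  disjoint := by
    simp only [mem_insert, forall_eq_or_imp]
    refine ⟨⟨fun h => absurd rfl h, fun γ hγ _ => (hCt.mono_left (hP.subset hγ)).symm⟩,
      fun β hβ => ⟨fun _ => hCt.mono_left (hP.subset hβ), hP.disjoint β hβ⟩⟩
  mem_iff x := by simp [hP.mem_iff, or_comm]

end IsYPartition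

def blocksSdiff (P : Finset (Finset (Fin n))) (t : Finset (Fin n)) : Finset (Finset (Fin n)) :=
  (P.image (· \ t)).erase ∅

section blocksSdiff

variable {C t : Finset (Fin n)} {P : Finset (Finset (Fin n))}

theorem mem_blocksSdiff {β' : Finset (Fin n)} :
    β' ∈ blocksSdiff P t ↔ β'.Nonempty ∧ ∃ β ∈ P, β \ t = β' := by
  simp [blocksSdiff, nonempty_iff_ne_empty]

theorem card_blocksSdiff_add_one {a : Finset (Fin n)} (ha : a ∈ P) (hat : a ⊆ t) :
    (blocksSdiff P t).card + 1 = (P.image (· \ t)).card :=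
  card_erase_add_one (mem_image.mpr ⟨a, ha, sdiff_eq_empty_iff_subset.mpr hat⟩)

/-- The hypothesis on `z` rules out a block strictly containing `t`, whose difference with `t`
need not be an interval. -/
theorem IsYPartition.blocksSdiff (hY : IsPermClass Y) (hP : IsYPartition Y π C P)
    (ht : IsInterval π t) {z : Fin n} (hz : z ∈ t) (hzP : ∀ β ∈ P, z ∈ β → β ⊆ t) :
    IsYPartition Y π (C \ t) (blocksSdiff P t) where
  nonempty β' hβ' := (mem_blocksSdiff.mp hβ').1
  isInterval β' hβ' := by
    obtain ⟨hne, β, hβ, rfl⟩ := mem_blocksSdiff.mp hβ'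
    refine (hP.isInterval β hβ).sdiff ht fun htβ => ?_
    simp [sdiff_eq_empty_iff_subset.mpr (hzP β hβ (htβ hz))] at hne
  hasYPattern β' hβ' := by
    obtain ⟨-, β, hβ, rfl⟩ := mem_blocksSdiff.mp hβ'
    exact (hP.hasYPattern β hβ).mono hY sdiff_subset
  disjoint β' hβ' γ' hγ' hne := by
    obtain ⟨-, β, hβ, rfl⟩ := mem_blocksSdiff.mp hβ'
    obtain ⟨-, γ, hγ, rfl⟩ := mem_blocksSdiff.mp hγ'
    exact (hP.disjoint β hβ γ hγ fun h => hne (h ▸ rfl)).mono sdiff_subset sdiff_subset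
  mem_iff x := by
    simp only [mem_sdiff, hP.mem_iff, mem_blocksSdiff]
    constructor
    · rintro ⟨⟨β, hβ, hxβ⟩, hxt⟩
      exact ⟨β \ t, ⟨⟨x, mem_sdiff.mpr ⟨hxβ, hxt⟩⟩, β, hβ, rfl⟩, mem_sdiff.mpr ⟨hxβ, hxt⟩⟩
    · rintro ⟨-, ⟨-, β, hβ, rfl⟩, hx⟩
      exact ⟨⟨β, hβ, (mem_sdiff.mp hx).1⟩, (mem_sdiff.mp hx).2⟩

end blocksSdiff

def BlocksEmbed (A B : Finset (Finset (Fin n))) : Prop :=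
  ∃ f : Finset (Fin n) → Finset (Fin n), Set.MapsTo f A B ∧ Set.InjOn f A ∧
    ∀ α ∈ A, (α ∩ f α).Nonempty

theorem BlocksEmbed.of_blocksSdiff {A B : Finset (Finset (Fin n))} {a b t : Finset (Fin n)}
    (ha : a ∈ A) (hb : b ∈ B) (hab : (a ∩ b).Nonempty) (hat : a ⊆ t) (hbt : b ⊆ t)
    (hinj : Set.InjOn (· \ t) A) (h : BlocksEmbed (blocksSdiff A t) (blocksSdiff B t)) :
    BlocksEmbed A B := by
  classical
  obtain ⟨g, hg_maps, hg_inj, hg_meets⟩ := h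
  choose! lift hlift_mem hlift_sdiff using fun (β' : Finset (Fin n)) (hβ' : β' ∈ blocksSdiff B t) =>
    (mem_blocksSdiff.mp hβ').2
  have hsdiff_mem : ∀ α ∈ A, α ≠ a → α \ t ∈ blocksSdiff A t := fun α hα hαa =>
    mem_blocksSdiff.mpr ⟨nonempty_iff_ne_empty.mpr fun h => hαa (hinj hα ha
      (h.trans (sdiff_eq_empty_iff_subset.mpr hat).symm)), α, hα, rfl⟩
  have hg_ne : ∀ α ∈ A, α ≠ a → lift (g (α \ t)) ≠ b := fun α hα hαa h => by
    have hmem := hg_maps (hsdiff_mem α hα hαa)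
    have := (mem_blocksSdiff.mp hmem).1
    rw [← hlift_sdiff _ hmem, h, sdiff_eq_empty_iff_subset.mpr hbt] at this
    exact not_nonempty_empty this
  refine ⟨fun α => if α = a then b else lift (g (α \ t)), fun α hα => ?_, fun α hα α' hα' h => ?_,
    fun α hα => ?_⟩
  · dsimp only
    split_ifs with hαa
    · exact hb
    · exact hlift_mem _ (hg_maps (hsdiff_mem α hα hαa))
  · dsimp only at h
    split_ifs at h with hαa hα'a hα'a
    · exact hαa.trans hα'a.symm
    · exact absurd h.symm (hg_ne α' hα' hα'a)
    · exact absurd h (hg_ne α hα hαa)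
    · have hmem := hg_maps (hsdiff_mem α hα hαa)
      have hmem' := hg_maps (hsdiff_mem α' hα' hα'a)
      have := congrArg (· \ t) h
      simp only [hlift_sdiff _ hmem, hlift_sdiff _ hmem'] at this
      exact hinj hα hα' (hg_inj (hsdiff_mem α hα hαa) (hsdiff_mem α' hα' hα'a) this)
  · dsimp only
    split_ifs with hαa
    · exact hαa ▸ hab
    · have hmem := hsdiff_mem α hα hαa
      exact (hg_meets _ hmem).mono
        (inter_subset_inter sdiff_subset ((hlift_sdiff _ (hg_maps hmem)).ge.trans sdiff_subset))

theorem IsYPartition.blocksEmbed_of_minimal (hY : IsPermClass Y) {C : Finset (Fin n)}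
    {A B : Finset (Finset (Fin n))} (hA : IsYPartition Y π C A)
    (hAmin : ∀ Q, IsYPartition Y π C Q → A.card ≤ Q.card) (hB : IsYPartition Y π C B) :
    BlocksEmbed A B := by
  induction C using Finset.strongInduction generalizing A B with
  | H C ih =>
  rcases C.eq_empty_or_nonempty with rfl | hC
  · have hA_empty : A = ∅ := eq_empty_of_forall_notMem fun α hα =>
      (hA.nonempty α hα).ne_empty (subset_empty.mp (hA.subset hα))
    subst hA_empty
    exact ⟨id, by simp [Set.mapsTo_empty], by simp, by simp⟩
  set z := C.max' hC
  obtain ⟨a, ha, hza⟩ := (hA.mem_iff z).mp (C.max'_mem hC)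
  obtain ⟨b, hb, hzb⟩ := (hB.mem_iff z).mp (C.max'_mem hC)
  obtain ⟨t, ht, hat, hbt⟩ : ∃ t, (t ∈ A ∨ t ∈ B) ∧ a ⊆ t ∧ b ⊆ t := by
    rcases (hA.isInterval a ha).1.subset_or_subset (hB.isInterval b hb).1 hza hzb
      (fun x hx => C.le_max' x (hA.subset ha hx)) (fun x hx => C.le_max' x (hB.subset hb hx))
      with h | h
    · exact ⟨b, Or.inr hb, h, subset_rfl⟩
    · exact ⟨a, Or.inl ha, subset_rfl, h⟩
  obtain ⟨htC, htne, htint, htY⟩ : t ⊆ C ∧ t.Nonempty ∧ IsInterval π t ∧ HasYPattern Y π t := by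
    rcases ht with ht | ht
    · exact ⟨hA.subset ht, hA.nonempty t ht, hA.isInterval t ht, hA.hasYPattern t ht⟩
    · exact ⟨hB.subset ht, hB.nonempty t ht, hB.isInterval t ht, hB.hasYPattern t ht⟩
  have hA' := hA.blocksSdiff hY htint (hat hza) fun β hβ hzβ => hA.eq_of_mem hβ ha hzβ hza ▸ hat
  have hB' := hB.blocksSdiff hY htint (hat hza) fun β hβ hzβ => hB.eq_of_mem hβ hb hzβ hzb ▸ hbt
  have hA_le : ∀ Q, IsYPartition Y π (C \ t) Q → A.card ≤ Q.card + 1 := by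
    intro Q hQ
    have hQt := hQ.insert htne htint htY disjoint_sdiff_self_left
    rw [sdiff_union_of_subset htC] at hQt
    exact (hAmin _ hQt).trans (card_insert_le _ _)
  have hcard := card_blocksSdiff_add_one ha hat
  have himage_le : (A.image (· \ t)).card ≤ A.card := card_image_le
  -- By minimality, cutting `t` removes exactly one block of `A`, namely `a`.
  refine BlocksEmbed.of_blocksSdiff ha hb ⟨z, mem_inter.mpr ⟨hza, hzb⟩⟩ hat hbt ?_
    (ih (C \ t) (sdiff_ssubset htC htne) hA' (fun Q hQ => ?_) hB')
  · exact card_image_iff.mp (le_antisymm himage_le (by have := hA_le _ hA'; omega))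
  · have := hA_le Q hQ
    omega

namespace IsInflation

variable {m : ℕ} {σ : Equiv.Perm (Fin m)} {blocks : Fin m → Finset (Fin n)}

theorem injective (h : IsInflation π σ blocks) : Function.Injective blocks := fun i j hij => by
  obtain ⟨x, hx⟩ := h.1 i
  exact (h.2.2.1 x).unique hx (hij ▸ hx)

theorem isYPartition (h : IsInflation π σ blocks) (hY : ∀ i, HasYPattern Y π (blocks i)) :
    IsYPartition Y π univ (univ.image blocks) where
  nonempty := by simpa using h.1
  isInterval := by simpa using h.2.1
  hasYPattern := by simpa using hY
  disjoint := by
    simp only [mem_image, mem_univ, true_and, forall_exists_index, forall_apply_eq_imp_iff]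
    exact fun i j hij => disjoint_left.mpr fun x hxi hxj =>
      hij (congrArg blocks ((h.2.2.1 x).unique hxi hxj))
  mem_iff x := by simpa using (h.2.2.1 x).exists

theorem involves_of_meets {k : ℕ} {τ : Equiv.Perm (Fin k)} {blocks' : Fin k → Finset (Fin n)}
    (h : IsInflation π σ blocks) (h' : IsInflation π τ blocks') {g : Fin m → Fin k}
    (hg : Function.Injective g) (hmeet : ∀ i, (blocks i ∩ blocks' (g i)).Nonempty) :
    Involves σ τ := by
  choose x hx using hmeet
  simp only [mem_inter] at hx
  refine ⟨g, fun i j hij => (hg.ne hij.ne).lt_of_le ?_, fun i j => ?_⟩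
  · by_contra! hji
    exact (h.2.2.2.1 i j hij _ (hx i).1 _ (hx j).1).not_gt
      (h'.2.2.2.1 _ _ hji _ (hx j).2 _ (hx i).2)
  · rcases eq_or_ne i j with rfl | hij
    · exact iff_of_false (lt_irrefl _) (lt_irrefl _)
    rw [h.2.2.2.2 i j hij _ (hx i).1 _ (hx j).1, h'.2.2.2.2 _ _ (hg.ne hij) _ (hx i).2 _ (hx j).2]

end IsInflation

theorem IsYPartition.exists_isYDeflation {Q : Finset (Finset (Fin n))}
    (hQ : IsYPartition Y π univ Q) : ∃ σ : Equiv.Perm (Fin Q.card), IsYDeflation Y σ π := by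
  classical
  let e := Q.equivFin.symm
  choose rep hrep using fun i => hQ.nonempty _ (e i).2
  have hrep_inj : Function.Injective rep := fun i j hij =>
    e.injective (Subtype.ext (hQ.eq_of_mem (e i).2 (e j).2 (hrep i) (hij ▸ hrep j)))
  -- number the blocks from left to right
  obtain ⟨τ, hτ⟩ := exists_perm_lt_iff_lt hrep_inj
  let blocks : Fin Q.card → Finset (Fin n) := fun i => e (τ.symm i)
  have hmem (i) : blocks i ∈ Q := (e (τ.symm i)).2
  have hlt (i j) : i < j ↔ rep (τ.symm i) < rep (τ.symm j) := by
    simpa using hτ (τ.symm i) (τ.symm j)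
  have hdisj {i j} (hij : i ≠ j) : Disjoint (blocks i) (blocks j) :=
    hQ.disjoint _ (hmem i) _ (hmem j) fun h => hij (τ.symm.injective (e.injective (Subtype.ext h)))
  obtain ⟨σ, hσ⟩ := exists_perm_lt_iff_lt (f := fun i => π (rep (τ.symm i)))
    (π.injective.comp (hrep_inj.comp τ.symm.injective))
  refine ⟨σ, blocks, ⟨fun i => hQ.nonempty _ (hmem i), fun i => hQ.isInterval _ (hmem i),
    fun x => ?_, fun i j hij x hx y hy => ?_, fun i j hij x hx y hy => ?_⟩,
    fun i => hQ.hasYPattern _ (hmem i)⟩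
  · obtain ⟨β, hβ, hxβ⟩ := (hQ.mem_iff x).mp (mem_univ x)
    refine ⟨τ (e.symm ⟨β, hβ⟩), by simpa [blocks] using hxβ, fun j hxj => ?_⟩
    by_contra hj
    refine disjoint_left.mp (hdisj hj) hxj ?_
    simpa [blocks] using hxβ
  · exact (hQ.isInterval _ (hmem i)).1.lt_of_lt (hQ.isInterval _ (hmem j)).1 (hdisj hij.ne)
      (hrep _) (hrep _) hx hy ((hlt i j).mp hij)
  · have hi := hQ.isInterval _ (hmem i)
    have hj := hQ.isInterval _ (hmem j)
    rw [hσ]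
    exact ⟨hi.lt_of_lt hj (hdisj hij) (hrep _) (hrep _) hx hy,
      hi.lt_of_lt hj (hdisj hij) hx hy (hrep _) (hrep _)⟩

theorem IsYDeflation.involves_of_minimal (hY : IsPermClass Y) {m k : ℕ}
    {πY : Equiv.Perm (Fin m)} {σ : Equiv.Perm (Fin k)} (hπY : IsYDeflation Y πY π)
    (hmin : ∀ q : PermS, IsYDeflation Y q.2 π → m ≤ q.1) (hσ : IsYDeflation Y σ π) :
    Involves πY σ := by
  obtain ⟨A, hA, hAY⟩ := hπY
  obtain ⟨B, hB, hBY⟩ := hσ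
  have hAmin : ∀ Q, IsYPartition Y π univ Q → (univ.image A).card ≤ Q.card := fun Q hQ => by
    rw [card_image_of_injective _ hA.injective, card_univ, Fintype.card_fin]
    obtain ⟨σ', hσ'⟩ := hQ.exists_isYDeflation
    exact hmin ⟨_, σ'⟩ hσ'
  obtain ⟨f, hf_maps, hf_inj, hf_meets⟩ :=
    (hA.isYPartition hAY).blocksEmbed_of_minimal hY hAmin (hB.isYPartition hBY)
  have hA_mem (i) : A i ∈ univ.image A := mem_image_of_mem A (mem_univ i)
  choose g hg using fun i => mem_image.mp (hf_maps (hA_mem i))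
  refine hA.involves_of_meets hB (g := g) (fun i j hij => hA.injective ?_) fun i => ?_
  · exact hf_inj (hA_mem i) (hA_mem j) ((hg i).2.symm.trans (hij ▸ (hg j).2))
  · exact (hg i).2 ▸ hf_meets _ (hA_mem i)

end

theorem mem_wreath_iff_profile_general (X Y : Set PermS) (hX : IsPermClass X) (hY : IsPermClass Y)
    {n m : ℕ} (π : Equiv.Perm (Fin n))
    (πY : Equiv.Perm (Fin m)) (hdef : IsYDeflation Y πY π)
    (hmin : ∀ q : PermS, IsYDeflation Y q.2 π → m ≤ q.1) :
    InWreath X Y π ↔ (⟨m, πY⟩ : PermS) ∈ X :=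
  ⟨fun ⟨_, σ, hσX, hσ⟩ => hX ⟨m, πY⟩ ⟨_, σ⟩ (hdef.involves_of_minimal hY hmin hσ) hσX,
    fun h => ⟨m, πY, h, hdef⟩⟩

/-- `π ∈ X ≀ Y` if and only if the `Y`-profile `π^Y` of `π` lies in `X`. -/
theorem mem_wreath_iff_profile (X Y : Set PermS) (hX : IsPermClass X) (hY : IsPermClass Y)
    (h1 : (⟨1, 1⟩ : PermS) ∈ Y) {n m : ℕ} (π : Equiv.Perm (Fin n))
    (πY : Equiv.Perm (Fin m)) (hdef : IsYDeflation Y πY π)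
    (hmin : ∀ q : PermS, IsYDeflation Y q.2 π → m ≤ q.1) :
    InWreath X Y π ↔ (⟨m, πY⟩ : PermS) ∈ X :=
  mem_wreath_iff_profile_general X Y hX hY π πY hdef hmin
end

section
/- Let π be a permutation and let σ[π_1,...,π_m] be its substitution decomposition with skeleton σ of length m ≥ 4. Then the interval blocks π_1, ..., π_m are uniquely determined: if σ[π_1,...,π_m] = σ'[π'_1,...,π'_{m'}] with σ, σ' simple of length ≥ 4, then σ = σ', m = m', and π_i = π'_i for all i. -/
/-!
Let `π = σ[π₁,…,π_m]` with `σ` simple and `m ≥ 3`. If an interval of `π` meets two different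
blocks, the indices of the blocks it meets form an interval of `σ` with at least two elements,
hence all of `Fin m`. An interval meeting every block contains every block lying strictly
between two others in position or in value, and simplicity of `σ` rules out a block that is
extreme in both (removing it would leave an interval of size `m - 1`). So every proper interval
of `π` lies inside a single block. Applied to the blocks of a second such decomposition, this
makes each block of one decomposition a subset of a block of the other, so the two partitions
coincide; both are ordered by position, hence indexed identically, and the skeletons agree
because they record the same relative order of the blocks.
-/

open Finset

theorem StrictMono.apply_eq_self {α : Type*} [LinearOrder α] [WellFoundedLT α]
    [WellFoundedGT α] {f : α → α} (hf : StrictMono f) (a : α) : f a = a :=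
  le_antisymm hf.apply_le hf.le_apply

theorem Equiv.Perm.eq_of_lt_iff_lt {α : Type*} [LinearOrder α] [WellFoundedLT α]
    [WellFoundedGT α] {σ τ : Equiv.Perm α} (h : ∀ a b, σ a < σ b ↔ τ a < τ b) : σ = τ := by
  have hmono : StrictMono (τ ∘ σ.symm) := fun u v huv =>
    (h (σ.symm u) (σ.symm v)).1 (by simpa using huv)
  ext a
  simpa using (hmono.apply_eq_self (σ a)).symm

theorem consec_univ_erase {n : ℕ} {e : Fin n} (he : IsMin e ∨ IsMax e) :
    Consec (univ.erase e) := by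
  intro a b c ha hc hab hbc
  rw [mem_erase] at ha hc ⊢
  refine ⟨?_, mem_univ b⟩
  rintro rfl
  rcases he with he | he
  · exact ha.1 (le_antisymm hab (he hab))
  · exact hc.1 (le_antisymm (he hbc) hbc)

theorem IsSimple.not_extreme {m : ℕ} {σ : Equiv.Perm (Fin m)} (hσ : IsSimple σ) (hm : 3 ≤ m)
    (k : Fin m) : (¬IsMin k ∧ ¬IsMax k) ∨ (¬IsMin (σ k) ∧ ¬IsMax (σ k)) := by
  by_contra hk
  simp only [not_or, not_and_or, not_not] at hk
  have himage : (univ.erase k).image σ = univ.erase (σ k) := by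
    rw [image_erase σ.injective, image_univ_equiv]
  have hint : IsInterval σ (univ.erase k) :=
    ⟨consec_univ_erase hk.1, himage ▸ consec_univ_erase hk.2⟩
  have hcard : (univ.erase k).card = m - 1 := by
    rw [card_erase_of_mem (mem_univ k), card_univ, Fintype.card_fin]
  rcases hσ _ hint with hle | huniv
  · omega
  · exact (mem_erase.1 (huniv ▸ mem_univ k)).1 rfl

namespace IsInflation

variable {n m : ℕ} {π : Equiv.Perm (Fin n)} {σ : Equiv.Perm (Fin m)}
  {blocks : Fin m → Finset (Fin n)}

theorem nonempty (h : IsInflation π σ blocks) (i : Fin m) : (blocks i).Nonempty := h.1 i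

theorem isInterval (h : IsInflation π σ blocks) (i : Fin m) : IsInterval π (blocks i) := h.2.1 i

theorem exists_mem (h : IsInflation π σ blocks) (x : Fin n) : ∃ i, x ∈ blocks i :=
  (h.2.2.1 x).exists

theorem eq_of_mem_of_mem (h : IsInflation π σ blocks) {x : Fin n} {i j : Fin m}
    (hi : x ∈ blocks i) (hj : x ∈ blocks j) : i = j :=
  (h.2.2.1 x).unique hi hj

theorem lt_of_lt (h : IsInflation π σ blocks) {i j : Fin m} (hij : i < j) {x y : Fin n}
    (hx : x ∈ blocks i) (hy : y ∈ blocks j) : x < y :=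
  h.2.2.2.1 i j hij x hx y hy

theorem lt_iff_lt (h : IsInflation π σ blocks) {i j : Fin m} (hij : i ≠ j) {x y : Fin n}
    (hx : x ∈ blocks i) (hy : y ∈ blocks j) : σ i < σ j ↔ π x < π y :=
  h.2.2.2.2 i j hij x hx y hy

theorem eq_of_subset (h : IsInflation π σ blocks) {i j : Fin m}
    (hij : blocks i ⊆ blocks j) : i = j :=
  let ⟨_, hx⟩ := h.nonempty i
  h.eq_of_mem_of_mem hx (hij hx)

theorem le_of_mem_of_mem_of_lt (h : IsInflation π σ blocks) {i j : Fin m} {x y : Fin n}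
    (hx : x ∈ blocks i) (hy : y ∈ blocks j) (hxy : x < y) : i ≤ j :=
  not_lt.1 fun hji => (h.lt_of_lt hji hy hx).asymm hxy

theorem block_ne_univ (h : IsInflation π σ blocks) (hm : 2 ≤ m) (i : Fin m) :
    blocks i ≠ univ := by
  have : Nontrivial (Fin m) := Fin.nontrivial_iff_two_le.2 hm
  obtain ⟨j, hji⟩ := exists_ne i
  obtain ⟨y, hy⟩ := h.nonempty j
  intro huniv
  exact hji (h.eq_of_mem_of_mem hy (huniv ▸ mem_univ y))

section MeetingInterval

variable {s : Finset (Fin n)} {a b c : Fin m}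

theorem subset_of_lt_of_lt (h : IsInflation π σ blocks) (hs : IsInterval π s)
    (ha : (blocks a ∩ s).Nonempty) (hc : (blocks c ∩ s).Nonempty) (hab : a < b) (hbc : b < c) :
    blocks b ⊆ s := by
  obtain ⟨za, hza⟩ := ha
  obtain ⟨zc, hzc⟩ := hc
  rw [mem_inter] at hza hzc
  intro z hz
  exact hs.1 hza.2 hzc.2 (h.lt_of_lt hab hza.1 hz).le (h.lt_of_lt hbc hz hzc.1).le

theorem subset_of_apply_lt_of_apply_lt (h : IsInflation π σ blocks) (hs : IsInterval π s)
    (ha : (blocks a ∩ s).Nonempty) (hc : (blocks c ∩ s).Nonempty) (hab : σ a < σ b)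
    (hbc : σ b < σ c) : blocks b ⊆ s := by
  obtain ⟨za, hza⟩ := ha
  obtain ⟨zc, hzc⟩ := hc
  rw [mem_inter] at hza hzc
  intro z hz
  have hlt : π za < π z := (h.lt_iff_lt (ne_of_apply_ne σ hab.ne) hza.1 hz).1 hab
  have hgt : π z < π zc := (h.lt_iff_lt (ne_of_apply_ne σ hbc.ne) hz hzc.1).1 hbc
  exact π.injective.mem_finset_image.1
    (hs.2 (mem_image_of_mem π hza.2) (mem_image_of_mem π hzc.2) hlt.le hgt.le)

theorem isInterval_filter_meets (h : IsInflation π σ blocks) (hs : IsInterval π s) :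
    IsInterval σ (univ.filter fun k => (blocks k ∩ s).Nonempty) := by
  have hmeets : ∀ {k}, blocks k ⊆ s → k ∈ univ.filter fun k => (blocks k ∩ s).Nonempty :=
    fun {k} hk => mem_filter.2 ⟨mem_univ k, (h.nonempty k).mono (subset_inter subset_rfl hk)⟩
  constructor
  · intro a b c ha hc hab hbc
    rw [mem_filter] at ha hc
    rcases hab.eq_or_lt with rfl | hab
    · exact mem_filter.2 ha
    rcases hbc.eq_or_lt with rfl | hbc
    · exact mem_filter.2 hc
    exact hmeets (h.subset_of_lt_of_lt hs ha.2 hc.2 hab hbc)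
  · intro u v w hu hw huv hvw
    obtain ⟨a, ha, rfl⟩ := mem_image.1 hu
    obtain ⟨c, hc, rfl⟩ := mem_image.1 hw
    rw [mem_filter] at ha hc
    rcases huv.eq_or_lt with rfl | huv
    · exact hu
    rcases hvw.eq_or_lt with rfl | hvw
    · exact hw
    rw [← σ.apply_symm_apply v] at huv hvw ⊢
    exact mem_image_of_mem σ (hmeets (h.subset_of_apply_lt_of_apply_lt hs ha.2 hc.2 huv hvw))

theorem eq_univ_of_forall_meets (h : IsInflation π σ blocks) (hσ : IsSimple σ) (hm : 3 ≤ m)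
    (hs : IsInterval π s) (hmeets : ∀ k, (blocks k ∩ s).Nonempty) : s = univ := by
  refine eq_univ_of_forall fun z => ?_
  obtain ⟨k, hz⟩ := h.exists_mem z
  rcases hσ.not_extreme hm k with ⟨hmin, hmax⟩ | ⟨hmin, hmax⟩
  · obtain ⟨a, hak⟩ := not_isMin_iff.1 hmin
    obtain ⟨c, hkc⟩ := not_isMax_iff.1 hmax
    exact h.subset_of_lt_of_lt hs (hmeets a) (hmeets c) hak hkc hz
  · obtain ⟨u, hu⟩ := not_isMin_iff.1 hmin
    obtain ⟨v, hv⟩ := not_isMax_iff.1 hmax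
    rw [← σ.apply_symm_apply u] at hu
    rw [← σ.apply_symm_apply v] at hv
    exact h.subset_of_apply_lt_of_apply_lt hs (hmeets _) (hmeets _) hu hv hz

theorem exists_subset_block (h : IsInflation π σ blocks) (hσ : IsSimple σ) (hm : 3 ≤ m)
    (hs : IsInterval π s) (hne : s ≠ univ) : ∃ i, s ⊆ blocks i := by
  by_contra! hno
  obtain ⟨x, hxs, -⟩ := not_subset.1 (hno ⟨0, by omega⟩)
  obtain ⟨i, hxi⟩ := h.exists_mem x
  obtain ⟨y, hys, hyi⟩ := not_subset.1 (hno i)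
  obtain ⟨j, hyj⟩ := h.exists_mem y
  have hij : i ≠ j := by
    rintro rfl
    exact hyi hyj
  set K := univ.filter fun k => (blocks k ∩ s).Nonempty
  have hK : 1 < K.card := one_lt_card.2
    ⟨i, mem_filter.2 ⟨mem_univ i, ⟨x, mem_inter.2 ⟨hxi, hxs⟩⟩⟩,
     j, mem_filter.2 ⟨mem_univ j, ⟨y, mem_inter.2 ⟨hyj, hys⟩⟩⟩, hij⟩
  rcases hσ K (h.isInterval_filter_meets hs) with hle | hKuniv
  · omega
  · refine hne (h.eq_univ_of_forall_meets hσ hm hs fun k => ?_)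
    exact (mem_filter.1 (show k ∈ K from hKuniv ▸ mem_univ k)).2

end MeetingInterval

theorem blocks_heq_of_forall_subset {m' : ℕ} {σ' : Equiv.Perm (Fin m')}
    {blocks' : Fin m' → Finset (Fin n)} (h : IsInflation π σ blocks)
    (h' : IsInflation π σ' blocks') (hsub : ∀ j, ∃ i, blocks' j ⊆ blocks i)
    (hsub' : ∀ i, ∃ j, blocks i ⊆ blocks' j) : m = m' ∧ HEq blocks blocks' := by
  choose g hg using hsub
  choose f hf using hsub'
  have hgf : ∀ i, g (f i) = i := fun i => (h.eq_of_subset ((hf i).trans (hg (f i)))).symm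
  have hfg : ∀ j, f (g j) = j := fun j => (h'.eq_of_subset ((hg j).trans (hf (g j)))).symm
  obtain rfl : m = m' := Fin.equiv_iff_eq.1 ⟨⟨f, g, hgf, hfg⟩⟩
  have hfmono : StrictMono f := by
    intro a b hab
    obtain ⟨x, hx⟩ := h.nonempty a
    obtain ⟨y, hy⟩ := h.nonempty b
    refine (h'.le_of_mem_of_mem_of_lt (hf a hx) (hf b hy) (h.lt_of_lt hab hx hy)).lt_of_ne ?_
    intro hfab
    exact hab.ne (by rw [← hgf a, hfab, hgf])
  refine ⟨rfl, heq_of_eq (funext fun i => ?_)⟩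
  have hblock : blocks i = blocks' (f i) :=
    (hf i).antisymm (by simpa only [hgf] using hg (f i))
  rw [hblock, hfmono.apply_eq_self]

theorem skeleton_unique {σ' : Equiv.Perm (Fin m)} (h : IsInflation π σ blocks)
    (h' : IsInflation π σ' blocks) : σ = σ' := by
  refine Equiv.Perm.eq_of_lt_iff_lt fun i j => ?_
  rcases eq_or_ne i j with rfl | hij
  · simp only [lt_irrefl]
  obtain ⟨x, hx⟩ := h.nonempty i
  obtain ⟨y, hy⟩ := h.nonempty j
  rw [h.lt_iff_lt hij hx hy, h'.lt_iff_lt hij hx hy]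

end IsInflation

/-- uniqueness of the substitution decomposition when the skeleton
has length at least 4. -/
theorem substitution_decomposition_unique {n m m' : ℕ} (π : Equiv.Perm (Fin n))
    (σ : Equiv.Perm (Fin m)) (σ' : Equiv.Perm (Fin m'))
    (hm : 4 ≤ m) (hm' : 4 ≤ m') (hσ : IsSimple σ) (hσ' : IsSimple σ')
    (blocks : Fin m → Finset (Fin n)) (blocks' : Fin m' → Finset (Fin n))
    (h : IsInflation π σ blocks) (h' : IsInflation π σ' blocks') :
    m = m' ∧ HEq σ σ' ∧ HEq blocks blocks' := by
  obtain ⟨rfl, hblocks⟩ := h.blocks_heq_of_forall_subset h'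
    (fun j => h.exists_subset_block hσ (by omega) (h'.isInterval j) (h'.block_ne_univ (by omega) j))
    (fun i => h'.exists_subset_block hσ' (by omega) (h.isInterval i) (h.block_ne_univ (by omega) i))
  obtain rfl := eq_of_heq hblocks
  exact ⟨rfl, heq_of_eq (h.skeleton_unique h'), HEq.rfl⟩
end

section
/- If π' is any Y-deflation of a permutation π, then the Y-profile π^Y is involved in π' (i.e., π^Y ≤ π' in the pattern order). -/
/-!
Let `B t` (`t < m`) be the blocks of the minimal deflation `πY` and `C j` those of `π'`. It
suffices to find a strictly increasing `f` such that `B t` meets `C (f t)` for every `t`: a common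
point of `B a` and `C (f a)` and one of `B b` and `C (f b)` are ordered by `π` as `πY` orders
`a, b` and as `π'` orders `f a, f b`.

The blocks `C j` met by `B t` are those with `j` in an interval `[lo t, hi t]`, so a greedy choice
gives such an `f` as soon as every run `B l, …, B i` meets at least `i - l + 1` blocks of `C`,
i.e. `lo l + (i - l) ≤ hi i`. If it met fewer, replacing the blocks of `B` that lie inside
`C (lo l) ∪ … ∪ C (hi i)` by these blocks, and trimming the two blocks of `B` that stick out of
this segment, would give a `Y`-deflation of `π` with fewer than `m` blocks, because `Y` is closed
under patterns.
-/

open Finset Function Equiv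

section Intervals

variable {n : ℕ}

lemma Consec.sdiff_s18 {A D : Finset (Fin n)} (hA : Consec A) (hD : Consec D) {w : Fin n}
    (hwD : w ∈ D) (hwA : w ∉ A) : Consec (A \ D) := by
  intro a b c ha hc hab hbc
  rw [mem_sdiff] at ha hc ⊢
  refine ⟨hA ha.1 hc.1 hab hbc, fun hbD => ?_⟩
  rcases le_or_gt a w with haw | hwa
  · rcases le_or_gt w c with hwc | hcw
    · exact hwA (hA ha.1 hc.1 haw hwc)
    · exact hc.2 (hD hbD hwD hbc hcw.le)
  · exact ha.2 (hD hwD hbD hwa.le hab)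

lemma IsInterval.sdiff_s18 {π : Perm (Fin n)} {A D : Finset (Fin n)} (hA : IsInterval π A)
    (hD : IsInterval π D) {w : Fin n} (hwD : w ∈ D) (hwA : w ∉ A) : IsInterval π (A \ D) := by
  refine ⟨hA.1.sdiff_s18 hD.1 hwD hwA, ?_⟩
  rw [image_sdiff _ _ π.injective]
  exact hA.2.sdiff_s18 hD.2 (mem_image_of_mem π hwD) (by simpa using hwA)

lemma Consec.lt_iff_lt_of_disjoint {S T : Finset (Fin n)} (hS : Consec S) (hT : Consec T)
    (hST : Disjoint S T) {x x' y y' : Fin n} (hx : x ∈ S) (hx' : x' ∈ S) (hy : y ∈ T)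
    (hy' : y' ∈ T) : x < y ↔ x' < y' := by
  have key : ∀ {x x' y y'}, x ∈ S → x' ∈ S → y ∈ T → y' ∈ T → x < y → x' < y' := by
    intro x x' y y' hx hx' hy hy' hxy
    by_contra! hyx
    rcases le_or_gt y x' with hyx' | hxy'
    · exact disjoint_left.mp hST (hS hx hx' hxy.le hyx') hy
    · exact disjoint_left.mp hST hx' (hT hy' hy hyx hxy'.le)
  exact ⟨key hx hx' hy hy', key hx' hx hy' hy⟩

lemma IsInterval.lt_iff_lt_of_disjoint {π : Perm (Fin n)} {S T : Finset (Fin n)}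
    (hS : IsInterval π S) (hT : IsInterval π T) (hST : Disjoint S T) {x x' y y' : Fin n}
    (hx : x ∈ S) (hx' : x' ∈ S) (hy : y ∈ T) (hy' : y' ∈ T) : π x < π y ↔ π x' < π y' :=
  hS.2.lt_iff_lt_of_disjoint hT.2 ((disjoint_image π.injective).mpr hST)
    (mem_image_of_mem π hx) (mem_image_of_mem π hx') (mem_image_of_mem π hy)
    (mem_image_of_mem π hy')

end Intervals

lemma exists_perm_lt_iff_lt_s18 {α : Type*} [LinearOrder α] {r : ℕ} {g : Fin r → α}
    (hg : Injective g) : ∃ β : Perm (Fin r), ∀ a b, β a < β b ↔ g a < g b := by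
  have hsort : StrictMono (g ∘ Tuple.sort g) :=
    (Tuple.monotone_sort g).strictMono_of_injective (hg.comp (Tuple.sort g).injective)
  refine ⟨(Tuple.sort g)⁻¹, fun a b => ?_⟩
  simpa using (hsort.lt_iff_lt (a := (Tuple.sort g)⁻¹ a) (b := (Tuple.sort g)⁻¹ b)).symm

lemma exists_isPatternOf_s18 {n : ℕ} (π : Perm (Fin n)) (S : Finset (Fin n)) :
    ∃ (k : ℕ) (β : Perm (Fin k)), IsPatternOf β π S := by
  set f := S.orderEmbOfFin rfl
  obtain ⟨β, hβ⟩ := exists_perm_lt_iff_lt_s18 (π.injective.comp f.injective)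
  refine ⟨_, β, f, f.strictMono, S.orderEmbOfFin_mem rfl, fun x hx => ?_, hβ⟩
  rwa [← mem_coe, ← S.range_orderEmbOfFin rfl] at hx

def HasPatternIn (Y : Set PermS) {n : ℕ} (π : Perm (Fin n)) (S : Finset (Fin n)) : Prop :=
  ∃ (k : ℕ) (α : Perm (Fin k)), (⟨k, α⟩ : PermS) ∈ Y ∧ IsPatternOf α π S

lemma HasPatternIn.mono {Y : Set PermS} (hY : IsPermClass Y) {n : ℕ} {π : Perm (Fin n)}
    {S T : Finset (Fin n)} (hT : HasPatternIn Y π T) (hST : S ⊆ T) : HasPatternIn Y π S := by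
  obtain ⟨k, α, hαY, g, hg, -, hgT, hgα⟩ := hT
  obtain ⟨k', β, hβ⟩ := exists_isPatternOf_s18 π S
  refine ⟨k', β, hY ⟨k', β⟩ ⟨k, α⟩ ?_ hαY, hβ⟩
  obtain ⟨f, hf, hfS, -, hfβ⟩ := hβ
  choose h hgh using fun a => hgT (f a) (hST (hfS a))
  refine ⟨h, fun a b hab => hg.lt_iff_lt.mp (by rw [hgh, hgh]; exact hf hab), fun a b => ?_⟩
  rw [hfβ, hgα, hgh, hgh]

namespace IsInflation

variable {n m : ℕ} {π : Perm (Fin n)} {σ : Perm (Fin m)} {B : Fin m → Finset (Fin n)}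
  (hB : IsInflation π σ B)

noncomputable def blockIdx (x : Fin n) : Fin m := (hB.2.2.1 x).exists.choose

lemma mem_blockIdx (x : Fin n) : x ∈ B (hB.blockIdx x) := (hB.2.2.1 x).exists.choose_spec

lemma blockIdx_eq_iff {x : Fin n} {t : Fin m} : hB.blockIdx x = t ↔ x ∈ B t :=
  ⟨fun h => h ▸ hB.mem_blockIdx x, fun h => (hB.2.2.1 x).unique (hB.mem_blockIdx x) h⟩

lemma lt_of_blockIdx_lt {x y : Fin n} (h : hB.blockIdx x < hB.blockIdx y) : x < y :=
  hB.2.2.2.1 _ _ h x (hB.mem_blockIdx x) y (hB.mem_blockIdx y)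

lemma blockIdx_mono : Monotone hB.blockIdx :=
  fun _ _ hxy => not_lt.mp fun h => (hB.lt_of_blockIdx_lt h).not_ge hxy

lemma blockIdx_lt_iff {x : Fin n} {t : Fin m} :
    hB.blockIdx x < t ↔ x < (B t).min' (hB.1 t) := by
  have hmin : hB.blockIdx ((B t).min' (hB.1 t)) = t := hB.blockIdx_eq_iff.mpr (min'_mem _ _)
  refine ⟨fun h => hB.lt_of_blockIdx_lt (by rwa [hmin]), fun h => ?_⟩
  refine lt_of_le_of_ne (hmin ▸ hB.blockIdx_mono h.le) fun hxt => h.not_ge ?_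
  exact min'_le _ _ (hB.blockIdx_eq_iff.mp hxt)

lemma lt_blockIdx_iff {x : Fin n} {t : Fin m} :
    t < hB.blockIdx x ↔ (B t).max' (hB.1 t) < x := by
  have hmax : hB.blockIdx ((B t).max' (hB.1 t)) = t := hB.blockIdx_eq_iff.mpr (max'_mem _ _)
  refine ⟨fun h => hB.lt_of_blockIdx_lt (by rwa [hmax]), fun h => ?_⟩
  refine lt_of_le_of_ne' (hmax ▸ hB.blockIdx_mono h.le) fun hxt => h.not_ge ?_
  exact le_max' _ _ (hB.blockIdx_eq_iff.mp hxt)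

lemma min'_le_max' {l i : Fin m} (hli : l ≤ i) : (B l).min' (hB.1 l) ≤ (B i).max' (hB.1 i) := by
  rcases hli.eq_or_lt with rfl | hlt
  · exact min'_le _ _ (max'_mem _ _)
  · exact (hB.2.2.2.1 l i hlt _ (min'_mem _ _) _ (max'_mem _ _)).le

lemma exists_mem_block_of_le_of_le {S : Finset (Fin n)} (hS : Consec S) {a b : Fin n}
    (ha : a ∈ S) (hb : b ∈ S) {t : Fin m} (hat : hB.blockIdx a ≤ t) (htb : t ≤ hB.blockIdx b) :
    ∃ x ∈ S, x ∈ B t := by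
  rcases hat.eq_or_lt with rfl | hat
  · exact ⟨a, ha, hB.mem_blockIdx a⟩
  · refine ⟨_, hS ha hb (hB.blockIdx_lt_iff.mp hat).le ?_, min'_mem _ _⟩
    exact not_lt.mp (hB.blockIdx_lt_iff.not.mp htb.not_gt)

end IsInflation

lemma exists_isYDeflation_of_monotone {Y : Set PermS} {n : ℕ} {π : Perm (Fin n)}
    {κ : Type*} [LinearOrder κ] (key : Fin n → κ) (hkey : Monotone key)
    (hint : ∀ x, IsInterval π {y | key y = key x})
    (hpat : ∀ x, HasPatternIn Y π {y | key y = key x}) :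
    ∃ σ : Perm (Fin #(univ.image key)), IsYDeflation Y σ π := by
  set e := (univ.image key).orderIsoOfFin rfl
  have hsurj : ∀ a, ∃ x, key x = e a := fun a => by
    obtain ⟨x, -, hx⟩ := mem_image.mp (e a).2
    exact ⟨x, hx⟩
  choose rep hrep using hsurj
  set blocks : Fin #(univ.image key) → Finset (Fin n) := fun a => {y | key y = key (rep a)}
  have hmem : ∀ {a y}, y ∈ blocks a ↔ key y = e a := by simp [blocks, hrep]
  have hdisj : ∀ {a b}, a ≠ b → Disjoint (blocks a) (blocks b) := fun hab =>
    disjoint_left.mpr fun y hya hyb => hab (e.injective (Subtype.ext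
      ((hmem.mp hya).symm.trans (hmem.mp hyb))))
  have hrep_inj : Injective rep := fun a b hab =>
    e.injective (Subtype.ext ((hrep a).symm.trans (hab ▸ hrep b)))
  obtain ⟨σ, hσ⟩ := exists_perm_lt_iff_lt_s18 (π.injective.comp hrep_inj)
  refine ⟨σ, blocks, ⟨fun a => ⟨rep a, by simp [blocks]⟩, fun a => hint (rep a), fun x => ?_,
    fun a b hab x hx y hy => ?_, fun a b hab x hx y hy => ?_⟩, fun a => hpat (rep a)⟩
  · refine ⟨e.symm ⟨key x, by simp⟩, by simp [hmem], fun a hx => ?_⟩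
    simp [hmem.mp hx]
  · exact hkey.reflect_lt (by rw [hmem.mp hx, hmem.mp hy]; exact e.strictMono hab)
  · have hrep_mem : ∀ a, rep a ∈ blocks a := fun a => by simp [blocks]
    exact (hσ a b).trans ((hint (rep a)).lt_iff_lt_of_disjoint (hint (rep b)) (hdisj hab)
      (hrep_mem a) hx (hrep_mem b) hy)

lemma exists_strictMono_le_le {m m' : ℕ} (lo hi : Fin m → Fin m')
    (h : ∀ l i, l ≤ i → (lo l : ℕ) + i ≤ hi i + l) :
    ∃ f : Fin m → Fin m', StrictMono f ∧ ∀ i, lo i ≤ f i ∧ f i ≤ hi i := by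
  -- the greedy choice `g i = max (g (i - 1) + 1) (lo i)`, in closed form
  set term : Fin m → Fin m → ℕ := fun i l => lo l + (i - l)
  set g : Fin m → ℕ := fun i => (Iic i).sup (term i)
  have le_g : ∀ {l i}, l ≤ i → term i l ≤ g i := fun hli => le_sup (mem_Iic.mpr hli)
  have g_le : ∀ i, g i ≤ hi i := fun i => Finset.sup_le fun l hl => by
    have hli : l ≤ i := mem_Iic.mp hl
    have := h l i hli
    have : (l : ℕ) ≤ i := hli
    simp only [term]
    omega
  refine ⟨fun i => ⟨g i, (g_le i).trans_lt (hi i).isLt⟩, fun i i' hii' => ?_,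
    fun i => ⟨?_, g_le i⟩⟩
  · obtain ⟨l, hl, hgl⟩ := exists_mem_eq_sup (Iic i) nonempty_Iic (term i)
    have hli : l ≤ i := mem_Iic.mp hl
    have : (l : ℕ) ≤ i := hli
    have : (i : ℕ) < i' := hii'
    show g i < g i'
    calc g i = term i l := hgl
      _ < term i' l := by simp only [term]; omega
      _ ≤ g i' := le_g (hli.trans hii'.le)
  · show (lo i : ℕ) ≤ g i
    simpa [term] using le_g (le_refl i)

section Splice

variable {n m m' : ℕ} {π : Perm (Fin n)} {σ : Perm (Fin m)} {σ' : Perm (Fin m')}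
  {B : Fin m → Finset (Fin n)} {C : Fin m' → Finset (Fin n)}
  (hB : IsInflation π σ B) (hC : IsInflation π σ' C)

lemma blockIdx_lt_of_blockIdx_lt_blockIdx_min' {y : Fin n} {t : Fin m}
    (h : hC.blockIdx y < hC.blockIdx ((B t).min' (hB.1 t))) : hB.blockIdx y < t :=
  hB.blockIdx_lt_iff.mpr (hC.lt_of_blockIdx_lt h)

lemma blockIdx_le_blockIdx_min'_of_blockIdx_lt {y : Fin n} {t : Fin m}
    (h : hB.blockIdx y < t) : hC.blockIdx y ≤ hC.blockIdx ((B t).min' (hB.1 t)) :=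
  hC.blockIdx_mono (hB.blockIdx_lt_iff.mp h).le

lemma lt_blockIdx_of_blockIdx_max'_lt_blockIdx {y : Fin n} {t : Fin m}
    (h : hC.blockIdx ((B t).max' (hB.1 t)) < hC.blockIdx y) : t < hB.blockIdx y :=
  hB.lt_blockIdx_iff.mpr (hC.lt_of_blockIdx_lt h)

lemma blockIdx_max'_le_blockIdx_of_lt_blockIdx {y : Fin n} {t : Fin m}
    (h : t < hB.blockIdx y) : hC.blockIdx ((B t).max' (hB.1 t)) ≤ hC.blockIdx y :=
  hC.blockIdx_mono (hB.lt_blockIdx_iff.mp h).le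

/-- Numbers, from left to right, the blocks of the deflation obtained from `B` by cutting out the
segment `C j₀ ∪ … ∪ C j₁` running from the first point of `B l` to the last point of `B i`, and
inserting the blocks `C j₀, …, C j₁` instead. -/
noncomputable def spliceKey (l i : Fin m) (y : Fin n) : ℕ :=
  let j₀ := hC.blockIdx ((B l).min' (hB.1 l))
  let j₁ := hC.blockIdx ((B i).max' (hB.1 i))
  if hC.blockIdx y < j₀ then hB.blockIdx y
  else if hC.blockIdx y ≤ j₁ then l + hC.blockIdx y - j₀
  else hB.blockIdx y + (l + j₁) - (i + j₀)

variable {l i : Fin m}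

lemma spliceKey_mono (hli : l ≤ i) : Monotone (spliceKey hB hC l i) := by
  intro x y hxy
  have := blockIdx_lt_of_blockIdx_lt_blockIdx_min' hB hC (y := x) (t := l)
  have := lt_blockIdx_of_blockIdx_max'_lt_blockIdx hB hC (y := y) (t := i)
  have := hC.blockIdx_mono (hB.min'_le_max' hli)
  have := hB.blockIdx_mono hxy
  have := hC.blockIdx_mono hxy
  simp only [spliceKey]
  split_ifs <;> omega

lemma spliceKey_lt (hli : l ≤ i) (y : Fin n) : spliceKey hB hC l i y <
    m + (l + hC.blockIdx ((B i).max' (hB.1 i))) - (i + hC.blockIdx ((B l).min' (hB.1 l))) := by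
  have := blockIdx_lt_of_blockIdx_lt_blockIdx_min' hB hC (y := y) (t := l)
  have := lt_blockIdx_of_blockIdx_max'_lt_blockIdx hB hC (y := y) (t := i)
  have := hC.blockIdx_mono (hB.min'_le_max' hli)
  have := (hB.blockIdx y).isLt
  have := i.isLt
  simp only [spliceKey]
  split_ifs <;> omega

lemma spliceKey_fiber_eq (hli : l ≤ i) (x : Fin n) :
    (hB.blockIdx x < l ∧ ({y | spliceKey hB hC l i y = spliceKey hB hC l i x} : Finset (Fin n)) =
      B (hB.blockIdx x) \ C (hC.blockIdx ((B l).min' (hB.1 l)))) ∨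
    ({y | spliceKey hB hC l i y = spliceKey hB hC l i x} : Finset (Fin n)) = C (hC.blockIdx x) ∨
    (i < hB.blockIdx x ∧ ({y | spliceKey hB hC l i y = spliceKey hB hC l i x} : Finset (Fin n)) =
      B (hB.blockIdx x) \ C (hC.blockIdx ((B i).max' (hB.1 i)))) := by
  have hfacts : ∀ y, (hC.blockIdx y < hC.blockIdx ((B l).min' (hB.1 l)) → hB.blockIdx y < l) ∧
      (hB.blockIdx y < l → hC.blockIdx y ≤ hC.blockIdx ((B l).min' (hB.1 l))) ∧
      (hC.blockIdx ((B i).max' (hB.1 i)) < hC.blockIdx y → i < hB.blockIdx y) ∧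
      (i < hB.blockIdx y → hC.blockIdx ((B i).max' (hB.1 i)) ≤ hC.blockIdx y) := fun y =>
    ⟨blockIdx_lt_of_blockIdx_lt_blockIdx_min' hB hC,
      blockIdx_le_blockIdx_min'_of_blockIdx_lt hB hC,
      lt_blockIdx_of_blockIdx_max'_lt_blockIdx hB hC,
      blockIdx_max'_le_blockIdx_of_lt_blockIdx hB hC⟩
  have := hC.blockIdx_mono (hB.min'_le_max' hli)
  obtain ⟨hx₀, -, hx₁, -⟩ := hfacts x
  simp only [Finset.ext_iff, mem_filter, mem_univ, true_and, mem_sdiff, ← hB.blockIdx_eq_iff,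
    ← hC.blockIdx_eq_iff]
  by_cases h₀ : hC.blockIdx x < hC.blockIdx ((B l).min' (hB.1 l))
  · refine Or.inl ⟨hx₀ h₀, fun y => ?_⟩
    have := hfacts y
    simp only [spliceKey]
    split_ifs <;> omega
  by_cases h₁ : hC.blockIdx ((B i).max' (hB.1 i)) < hC.blockIdx x
  · refine Or.inr (Or.inr ⟨hx₁ h₁, fun y => ?_⟩)
    have := hfacts y
    simp only [spliceKey]
    split_ifs <;> omega
  · refine Or.inr (Or.inl fun y => ?_)
    have := hfacts y
    simp only [spliceKey]
    split_ifs <;> omega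

lemma exists_isYDeflation_splice {Y : Set PermS} (hY : IsPermClass Y)
    (hBY : ∀ t, HasPatternIn Y π (B t)) (hCY : ∀ j, HasPatternIn Y π (C j)) (hli : l ≤ i) :
    ∃ (k : ℕ) (τ : Perm (Fin k)), IsYDeflation Y τ π ∧
      k + i + hC.blockIdx ((B l).min' (hB.1 l)) ≤ m + l + hC.blockIdx ((B i).max' (hB.1 i)) := by
  have trimmed : ∀ {t w}, hB.blockIdx w ≠ t →
      IsInterval π (B t \ C (hC.blockIdx w)) ∧ HasPatternIn Y π (B t \ C (hC.blockIdx w)) :=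
    fun hw => ⟨(hB.2.1 _).sdiff_s18 (hC.2.1 _) (hC.mem_blockIdx _)
      fun hw' => hw (hB.blockIdx_eq_iff.mpr hw'), (hBY _).mono hY sdiff_subset⟩
  have hfiber : ∀ x, IsInterval π {y | spliceKey hB hC l i y = spliceKey hB hC l i x} ∧
      HasPatternIn Y π {y | spliceKey hB hC l i y = spliceKey hB hC l i x} := by
    intro x
    rcases spliceKey_fiber_eq hB hC hli x with ⟨hx, h⟩ | h | ⟨hx, h⟩ <;> rw [h]
    · exact trimmed ((hB.blockIdx_eq_iff.mpr (min'_mem _ _)).trans_ne hx.ne')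
    · exact ⟨hC.2.1 _, hCY _⟩
    · exact trimmed ((hB.blockIdx_eq_iff.mpr (max'_mem _ _)).trans_ne hx.ne)
  obtain ⟨τ, hτ⟩ := exists_isYDeflation_of_monotone _ (spliceKey_mono hB hC hli)
    (fun x => (hfiber x).1) (fun x => (hfiber x).2)
  refine ⟨_, τ, hτ, ?_⟩
  have hcard := card_le_card (s := univ.image (spliceKey hB hC l i))
    (image_subset_iff.mpr fun y _ => mem_range.mpr (spliceKey_lt hB hC hli y))
  rw [card_range] at hcard
  have := hC.blockIdx_mono (hB.min'_le_max' hli)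
  have := i.isLt
  omega

end Splice

theorem profile_involved_in_deflation_general (Y : Set PermS) (hY : IsPermClass Y)
    {n m m' : ℕ} (π : Equiv.Perm (Fin n))
    (πY : Equiv.Perm (Fin m)) (hdef : IsYDeflation Y πY π)
    (hmin : ∀ q : PermS, IsYDeflation Y q.2 π → m ≤ q.1)
    (π' : Equiv.Perm (Fin m')) (hdef' : IsYDeflation Y π' π) :
    Involves πY π' := by
  obtain ⟨B, hB, hBY⟩ := hdef
  obtain ⟨C, hC, hCY⟩ := hdef'
  obtain ⟨f, hf, hfB⟩ := exists_strictMono_le_le (fun t => hC.blockIdx ((B t).min' (hB.1 t)))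
      (fun t => hC.blockIdx ((B t).max' (hB.1 t))) fun l i hli => by
    obtain ⟨k, τ, hτ, hk⟩ := exists_isYDeflation_splice hB hC hY hBY hCY hli
    have : m ≤ k := hmin ⟨k, τ⟩ hτ
    omega
  have hmeet : ∀ t, ∃ x ∈ B t, x ∈ C (f t) := fun t =>
    hC.exists_mem_block_of_le_of_le (hB.2.1 t).1 (min'_mem _ _) (max'_mem _ _) (hfB t).1 (hfB t).2
  refine ⟨f, hf, fun a b => ?_⟩
  rcases eq_or_ne a b with rfl | hab
  · simp
  obtain ⟨x, hxB, hxC⟩ := hmeet a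
  obtain ⟨y, hyB, hyC⟩ := hmeet b
  exact (hB.2.2.2.2 a b hab x hxB y hyB).trans
    (hC.2.2.2.2 _ _ (hf.injective.ne hab) x hxC y hyC).symm

/-- the `Y`-profile `π^Y` (the shortest `Y`-deflation of `π`) is
involved in every `Y`-deflation `π'` of `π`. -/
theorem profile_involved_in_deflation (Y : Set PermS) (hY : IsPermClass Y)
    (h1 : (⟨1, 1⟩ : PermS) ∈ Y) {n m m' : ℕ} (π : Equiv.Perm (Fin n))
    (πY : Equiv.Perm (Fin m)) (hdef : IsYDeflation Y πY π)
    (hmin : ∀ q : PermS, IsYDeflation Y q.2 π → m ≤ q.1)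
    (π' : Equiv.Perm (Fin m')) (hdef' : IsYDeflation Y π' π) :
    Involves πY π' :=
  profile_involved_in_deflation_general Y hY π πY hdef hmin π' hdef'
end
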